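/- arXiv:2404.07134 — 2 statements merged into one kernel-verified Lean document; each statement's English description precedes it below -/
import Mathlib

section
/- For the SA-branch function G(Ψ) = Ψ² − η₃Ψ + η₁(η₃−Ψ)/(1−Ψ) with 0 < η₃ < 1 and η₁ > η₃/(1−η₃), G is strictly decreasing on (−∞, 0]; in particular, for every η₂ > η₁η₃ there exists exactly one Ψ < 0 with G(Ψ) = η₂. -/
/-!
`G` is the parabola `Ψ² − η₃Ψ`, strictly decreasing left of its vertex `η₃/2 ≥ 0`, plus `η₁`
times the Möbius map `(η₃ − Ψ)/(1 − Ψ) = 1 − (1 − η₃)/(1 − Ψ)`, which is nonincreasing on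
`Ψ < 1` because `η₃ ≤ 1`, and `η₁ > η₃/(1 − η₃) > 0`. So `G` is strictly decreasing on
`(−∞, 0]` without any derivative computation. As `G 0 = η₁η₃` and
`G Ψ ≥ Ψ² → ∞` as `Ψ → −∞`, the intermediate value theorem gives a solution of `G Ψ = η₂`,
and strict monotonicity makes it unique.
-/

open Set Filter

theorem StrictAntiOn.existsUnique_lt_eq {α β : Type*} [ConditionallyCompleteLinearOrder α]
    [TopologicalSpace α] [OrderTopology α] [DenselyOrdered α] [LinearOrder β]
    [TopologicalSpace β] [OrderClosedTopology β] {f : α → β} {a : α} {y : β}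
    (hf : StrictAntiOn f (Iic a)) (hcont : ContinuousOn f (Iic a))
    (hlim : Tendsto f atBot atTop) (hy : f a < y) :
    ∃! x, x < a ∧ f x = y := by
  obtain ⟨x, hxa, hfx⟩ := isPreconnected_Iic.intermediate_value_Ici self_mem_Iic
    (le_principal_iff.2 (Iic_mem_atBot a)) hcont hlim hy.le
  have hxa' : x < a := hxa.lt_of_ne (by rintro rfl; exact hy.ne hfx)
  refine ⟨x, ⟨hxa', hfx⟩, fun z ⟨hza, hfz⟩ => ?_⟩
  exact hf.injOn (mem_Iic.2 hza.le) hxa (hfz.trans hfx.symm)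

theorem strictAntiOn_sq_sub_mul (c : ℝ) :
    StrictAntiOn (fun x : ℝ => x ^ 2 - c * x) (Iic (c / 2)) := by
  intro x hx y hy hxy
  simp only [mem_Iic] at hx hy
  nlinarith

theorem antitoneOn_mul_sub_div_one_sub {a c : ℝ} (ha : 0 ≤ a) (hc : c ≤ 1) :
    AntitoneOn (fun x : ℝ => a * (c - x) / (1 - x)) (Iio 1) := by
  intro x hx y hy hxy
  simp only [mem_Iio] at hx hy
  rw [div_le_div_iff₀ (sub_pos.2 hy) (sub_pos.2 hx)]
  nlinarith [mul_nonneg (mul_nonneg ha (sub_nonneg.2 hc)) (sub_nonneg.2 hxy)]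

noncomputable def stommelSA (η₁ η₃ Ψ : ℝ) : ℝ :=
  Ψ ^ 2 - η₃ * Ψ + η₁ * (η₃ - Ψ) / (1 - Ψ)

section stommelSA

variable {η₁ η₃ : ℝ}

theorem stommelSA_zero : stommelSA η₁ η₃ 0 = η₁ * η₃ := by
  simp [stommelSA]

theorem continuousOn_stommelSA : ContinuousOn (stommelSA η₁ η₃) (Iio 1) := by
  unfold stommelSA
  fun_prop (disch := intro x hx; exact (sub_pos.2 hx).ne')

theorem strictAntiOn_stommelSA (hη₁ : 0 ≤ η₁) (hη₃ : 0 ≤ η₃) (hη₃' : η₃ ≤ 1) :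
    StrictAntiOn (stommelSA η₁ η₃) (Iic 0) :=
  ((strictAntiOn_sq_sub_mul η₃).mono (Iic_subset_Iic.2 (by positivity))).add_antitone
    ((antitoneOn_mul_sub_div_one_sub hη₁ hη₃').mono (Iic_subset_Iio.2 one_pos))

theorem tendsto_stommelSA_atBot (hη₁ : 0 ≤ η₁) (hη₃ : 0 ≤ η₃) :
    Tendsto (stommelSA η₁ η₃) atBot atTop := by
  refine tendsto_atTop_mono' _ ?_ tendsto_neg_atBot_atTop
  filter_upwards [Iic_mem_atBot (-1)] with Ψ hΨ
  have hfrac : 0 ≤ η₁ * (η₃ - Ψ) / (1 - Ψ) := by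
    apply div_nonneg (mul_nonneg hη₁ _) <;> linarith [mem_Iic.1 hΨ]
  simp only [stommelSA, mem_Iic] at hΨ ⊢
  nlinarith

end stommelSA

/-- For `0 < η₃ < 1` and `η₁ > η₃/(1−η₃)`, the SA branch function
`G(Ψ) = Ψ² − η₃Ψ + η₁(η₃−Ψ)/(1−Ψ)` is strictly decreasing on `(−∞, 0]`;
in particular, for every `η₂ > η₁η₃` there is exactly one `Ψ < 0` with
`G Ψ = η₂`. -/
theorem stommel_SA_branch_monotone (η₁ η₃ : ℝ)
    (hη₃ : 0 < η₃) (hη₃' : η₃ < 1) (hη₁ : η₁ > η₃ / (1 - η₃))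
    (G : ℝ → ℝ)
    (hG : G = fun Ψ => Ψ ^ 2 - η₃ * Ψ + η₁ * (η₃ - Ψ) / (1 - Ψ)) :
    StrictAntiOn G (Set.Iic 0) ∧
    ∀ η₂ : ℝ, η₁ * η₃ < η₂ → ∃! Ψ : ℝ, Ψ < 0 ∧ G Ψ = η₂ := by
  obtain rfl : G = stommelSA η₁ η₃ := hG
  have hη₁₀ : 0 ≤ η₁ := ((div_pos hη₃ (sub_pos.2 hη₃')).trans hη₁).le
  have hanti := strictAntiOn_stommelSA hη₁₀ hη₃.le hη₃'.le
  refine ⟨hanti, fun η₂ hη₂ => hanti.existsUnique_lt_eq ?_ ?_ (stommelSA_zero.trans_lt hη₂)⟩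
  · exact continuousOn_stommelSA.mono (Iic_subset_Iio.2 one_pos)
  · exact tendsto_stommelSA_atBot hη₁₀ hη₃.le
end

section
/- Under the assumptions 0 < η₃ < 1, η₁ > η₃/(1−η₃), the function F(Ψ) = −Ψ² − η₃Ψ + η₁(η₃+Ψ)/(1+Ψ) on [0,∞) attains a strict local maximum at some Ψ* > 0; in particular there exist values of η₂ with F(0) < η₂ < F(Ψ*) such that the equation F(Ψ) = η₂ has at least two solutions Ψ ≥ 0 (bistability within the TH branch together with a saddle). -/
/-!
Writing `c = η₁(1 - η₃)`, the secant slope of `F` between `x` and `y` is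
`c / ((1 + x)(1 + y)) - η₃ - x - y`, which strictly decreases in each argument, so `F` is
strictly concave on `(-1, ∞)`. The slope from `0` is positive for small `Ψ` because `c > η₃`,
and negative at `Ψ = c`, so `F` rises above `F 0` and then falls below it on `[0, c]`. Its
maximum there is interior, hence strict by concavity, and every level between `F 0` and the
maximum is attained on both sides of the maximiser.
-/

open Set Filter Topology

lemma StrictConcaveOn.lt_of_isMaxOn {𝕜 E β : Type*} [Field 𝕜] [LinearOrder 𝕜]
    [IsStrictOrderedRing 𝕜] [AddCommMonoid β] [PartialOrder β] [IsOrderedAddMonoid β]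
    [AddCommMonoid E] [SMul 𝕜 E] [Module 𝕜 β] [PosSMulMono 𝕜 β]
    {s : Set E} {f : E → β} {x y : E} (hf : StrictConcaveOn 𝕜 s f) (hfx : IsMaxOn f s x)
    (hx : x ∈ s) (hy : y ∈ s) (hyx : y ≠ x) : f y < f x :=
  (hfx hy).lt_of_ne fun h => hyx <| hf.eq_of_isMaxOn (fun _ hz => h ▸ hfx hz) hfx hy hx

lemma ContinuousOn.exists_mem_Ioo_isMaxOn {f : ℝ → ℝ} {a b c : ℝ}
    (hf : ContinuousOn f (Icc a b)) (hc : c ∈ Icc a b) (hac : f a < f c) (hba : f b < f a) :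
    ∃ m ∈ Ioo a b, IsMaxOn f (Icc a b) m := by
  obtain ⟨m, hm, hmax⟩ := isCompact_Icc.exists_isMaxOn ⟨c, hc⟩ hf
  have ham : f a < f m := hac.trans_le (hmax hc)
  refine ⟨m, ⟨hm.1.lt_of_ne ?_, hm.2.lt_of_ne ?_⟩, hmax⟩
  · rintro rfl
    exact ham.false
  · rintro rfl
    exact (hba.trans ham).false

lemma ContinuousOn.exists_eq_on_both_sides {f : ℝ → ℝ} {a b m y : ℝ}
    (hf : ContinuousOn f (Icc a b)) (hm : m ∈ Ioo a b) (ha : f a < y) (hb : f b < y)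
    (hy : y < f m) : ∃ x₁ ∈ Ioo a m, ∃ x₂ ∈ Ioo m b, f x₁ = y ∧ f x₂ = y := by
  obtain ⟨x₁, hx₁, hfx₁⟩ := intermediate_value_Ioo hm.1.le
    (hf.mono (Icc_subset_Icc_right hm.2.le)) ⟨ha, hy⟩
  obtain ⟨x₂, hx₂, hfx₂⟩ := intermediate_value_Ioo' hm.2.le
    (hf.mono (Icc_subset_Icc_left hm.1.le)) ⟨hb, hy⟩
  exact ⟨x₁, hx₁, x₂, hx₂, hfx₁, hfx₂⟩

noncomputable def thBranch (η₁ η₃ Ψ : ℝ) : ℝ := -Ψ ^ 2 - η₃ * Ψ + η₁ * (η₃ + Ψ) / (1 + Ψ)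

namespace thBranch

variable {η₁ η₃ : ℝ}

lemma continuousOn : ContinuousOn (thBranch η₁ η₃) (Ioi (-1)) := by
  refine ContinuousOn.add (by fun_prop) (ContinuousOn.div (by fun_prop) (by fun_prop) ?_)
  intro Ψ (hΨ : -1 < Ψ)
  linarith

lemma apply_sub_apply {x y : ℝ} (hx : -1 < x) (hy : -1 < y) :
    thBranch η₁ η₃ y - thBranch η₁ η₃ x =
      (y - x) * (η₁ * (1 - η₃) / ((1 + x) * (1 + y)) - η₃ - x - y) := by
  have hx' : 1 + x ≠ 0 := by linarith
  have hy' : 1 + y ≠ 0 := by linarith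
  unfold thBranch
  field_simp
  ring

lemma strictConcaveOn (hc : 0 ≤ η₁ * (1 - η₃)) :
    StrictConcaveOn ℝ (Ioi (-1)) (thBranch η₁ η₃) := by
  refine strictConcaveOn_of_slope_strict_anti_adjacent (convex_Ioi _) ?_
  intro x y z (hx : -1 < x) (hz : -1 < z) hxy hyz
  have hy : -1 < y := hx.trans hxy
  rw [apply_sub_apply hy hz, apply_sub_apply hx hy, mul_div_cancel_left₀ _ (sub_pos.2 hyz).ne',
    mul_div_cancel_left₀ _ (sub_pos.2 hxy).ne']
  have : η₁ * (1 - η₃) / ((1 + y) * (1 + z)) ≤ η₁ * (1 - η₃) / ((1 + x) * (1 + y)) := by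
    have : 0 < (1 + x) * (1 + y) := by nlinarith
    gcongr <;> linarith
  linarith

lemma apply_zero_lt_apply_iff {Ψ : ℝ} (hΨ : 0 < Ψ) :
    thBranch η₁ η₃ 0 < thBranch η₁ η₃ Ψ ↔ (η₃ + Ψ) * (1 + Ψ) < η₁ * (1 - η₃) := by
  rw [← sub_pos, apply_sub_apply (by norm_num) (by linarith)]
  simp only [sub_zero, add_zero, one_mul]
  rw [mul_pos_iff_of_pos_left hΨ, sub_sub, sub_pos, lt_div_iff₀ (by linarith)]

lemma apply_lt_apply_zero_iff {Ψ : ℝ} (hΨ : 0 < Ψ) :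
    thBranch η₁ η₃ Ψ < thBranch η₁ η₃ 0 ↔ η₁ * (1 - η₃) < (η₃ + Ψ) * (1 + Ψ) := by
  rw [← sub_neg, apply_sub_apply (by norm_num) (by linarith)]
  simp only [sub_zero, add_zero, one_mul]
  rw [← smul_eq_mul, smul_neg_iff_of_pos_left hΨ, sub_sub, sub_neg, div_lt_iff₀ (by linarith)]

lemma exists_pos_apply_zero_lt_apply (h : η₃ < η₁ * (1 - η₃)) :
    ∃ Ψ, 0 < Ψ ∧ thBranch η₁ η₃ 0 < thBranch η₁ η₃ Ψ := by
  have hnear : ∀ᶠ Ψ in 𝓝[>] 0, (η₃ + Ψ) * (1 + Ψ) < η₁ * (1 - η₃) :=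
    nhdsWithin_le_nhds <| ContinuousAt.eventually_lt (by fun_prop) continuousAt_const
      (by simpa using h)
  obtain ⟨Ψ, hΨ, hpos⟩ := (hnear.and self_mem_nhdsWithin).exists
  exact ⟨Ψ, hpos, (apply_zero_lt_apply_iff hpos).2 hΨ⟩

end thBranch

/-- Under `0 < η₃ < 1` and `η₁ > η₃/(1−η₃)`, the TH branch function
`F(Ψ) = −Ψ² − η₃Ψ + η₁(η₃+Ψ)/(1+Ψ)` attains on `[0,∞)` a strict local
maximum at some `Ψ* > 0` with `F(Ψ*) > F(0)`; in particular there exist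
values `η₂` with `F(0) < η₂ < F(Ψ*)` for which `F(Ψ) = η₂` has at least two
solutions `Ψ ≥ 0` (bistability within the TH branch together with a saddle). -/
theorem stommel_TH_bistability (η₁ η₃ : ℝ)
    (hη₃ : 0 < η₃) (hη₃' : η₃ < 1) (hη₁ : η₁ > η₃ / (1 - η₃))
    (F : ℝ → ℝ)
    (hF : F = fun Ψ => -Ψ ^ 2 - η₃ * Ψ + η₁ * (η₃ + Ψ) / (1 + Ψ)) :
    ∃ Ψstar : ℝ, 0 < Ψstar ∧
      (∀ᶠ Ψ in nhds Ψstar, Ψ ≠ Ψstar → F Ψ < F Ψstar) ∧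
      F 0 < F Ψstar ∧
      ∃ η₂ : ℝ, F 0 < η₂ ∧ η₂ < F Ψstar ∧
        ∃ Ψa Ψb : ℝ, 0 ≤ Ψa ∧ 0 ≤ Ψb ∧ Ψa ≠ Ψb ∧ F Ψa = η₂ ∧ F Ψb = η₂ := by
  obtain rfl : F = thBranch η₁ η₃ := hF
  set c := η₁ * (1 - η₃)
  have hc : η₃ < c := by rwa [gt_iff_lt, div_lt_iff₀ (sub_pos.2 hη₃')] at hη₁
  obtain ⟨Ψ₀, hΨ₀, hrise⟩ := thBranch.exists_pos_apply_zero_lt_apply hc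
  have hΨ₀c : Ψ₀ < c := by nlinarith [(thBranch.apply_zero_lt_apply_iff hΨ₀).1 hrise]
  have hfall : thBranch η₁ η₃ c < thBranch η₁ η₃ 0 :=
    (thBranch.apply_lt_apply_zero_iff (hΨ₀.trans hΨ₀c)).2 (by nlinarith)
  have hdom : Icc 0 c ⊆ Ioi (-1) := fun Ψ hΨ => (neg_one_lt_zero.trans_le hΨ.1 :)
  have hcont : ContinuousOn (thBranch η₁ η₃) (Icc 0 c) := thBranch.continuousOn.mono hdom
  obtain ⟨m, hm, hmax⟩ := hcont.exists_mem_Ioo_isMaxOn ⟨hΨ₀.le, hΨ₀c.le⟩ hrise hfall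
  have hlt : thBranch η₁ η₃ 0 < thBranch η₁ η₃ m := hrise.trans_le (hmax ⟨hΨ₀.le, hΨ₀c.le⟩)
  refine ⟨m, hm.1, ?_, hlt, _, left_lt_add_div_two.2 hlt, add_div_two_lt_right.2 hlt, ?_⟩
  · filter_upwards [Icc_mem_nhds hm.1 hm.2] with Ψ hΨ hΨm
    exact ((thBranch.strictConcaveOn (by linarith)).subset hdom (convex_Icc 0 c)).lt_of_isMaxOn
      hmax (Ioo_subset_Icc_self hm) hΨ hΨm
  · obtain ⟨Ψa, hΨa, Ψb, hΨb, hFa, hFb⟩ := hcont.exists_eq_on_both_sides hm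
      (left_lt_add_div_two.2 hlt) (hfall.trans (left_lt_add_div_two.2 hlt))
      (add_div_two_lt_right.2 hlt)
    exact ⟨Ψa, Ψb, hΨa.1.le, (hm.1.trans hΨb.1).le, (hΨa.2.trans hΨb.1).ne, hFa, hFb⟩
end
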